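/- Fix two voters N = {1, 2}, a path-connected domain D and a strategy-proof rule f : D^2 → A. Let Ā, Â ⊆ A with |Ā| > 1 and |Â| > 1 be such that the subgraphs of the adjacency graph G_∼ induced on Ā and on Â are connected, and let π = (x_1, …, x_v) be a path in G_∼ with x_1 ∈ Ā and x_v ∈ Â. If f behaves like a dictatorship on Ā and f behaves like a dictatorship on Â, then f behaves like a dictatorship on Ā ∪ {x_1, …, x_v} ∪ Â. -/

import Mathlib

open Classical

set_option linter.unusedSectionVars false
set_option linter.unusedVariables false

/-- A strict preference over `A`, represented as a ranking bijection:
`P k` is the `(k+1)`-th ranked alternative. -/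
abbrev Pref (A : Type*) [Fintype A] := Fin (Fintype.card A) ≃ A

variable {A : Type*} [Fintype A] [DecidableEq A] [Nonempty A]

/-- `rk P k` : the `(k+1)`-th ranked alternative of `P` (0-indexed, so `rk P 0 = r₁(P)`). -/
noncomputable def rk (P : Pref A) (k : ℕ) : A :=
  if h : k < Fintype.card A then P ⟨k, h⟩ else Classical.arbitrary A

/-- The peak `r₁(P)`. -/
noncomputable def peak (P : Pref A) : A := rk P 0

/-- The second-ranked alternative `r₂(P)`. -/
noncomputable def second (P : Pref A) : A := rk P 1

/-- `a` is strictly preferred to `b` under `P`. -/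
def prefers (P : Pref A) (a b : A) : Prop := P.symm a < P.symm b

/-- Two preferences are completely reversed. -/
def Reversed (P P' : Pref A) : Prop := ∀ a b : A, prefers P a b ↔ prefers P' b a

/-- A profile lies in the domain `D`. -/
def InDom (D : Set (Pref A)) {n : ℕ} (P : Fin n → Pref A) : Prop := ∀ i, P i ∈ D

/-- Unanimity (an SCF satisfying it is called a rule). -/
def IsRule (D : Set (Pref A)) {n : ℕ} (f : (Fin n → Pref A) → A) : Prop :=
  ∀ P : Fin n → Pref A, InDom D P → ∀ a : A, (∀ i, peak (P i) = a) → f P = a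

/-- Strategy-proofness (relative to the domain `D`). -/
def StrategyProof (D : Set (Pref A)) {n : ℕ} (f : (Fin n → Pref A) → A) : Prop :=
  ∀ P : Fin n → Pref A, InDom D P → ∀ i : Fin n, ∀ Q ∈ D,
    f P = f (Function.update P i Q) ∨ prefers (P i) (f P) (f (Function.update P i Q))

/-- The tops-only property. -/
def TopsOnly (D : Set (Pref A)) {n : ℕ} (f : (Fin n → Pref A) → A) : Prop :=
  ∀ P P' : Fin n → Pref A, InDom D P → InDom D P' →
    (∀ i, peak (P i) = peak (P' i)) → f P = f P'

/-- Anonymity. -/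
def Anonymous (D : Set (Pref A)) {n : ℕ} (f : (Fin n → Pref A) → A) : Prop :=
  ∀ P : Fin n → Pref A, InDom D P → ∀ σ : Equiv.Perm (Fin n), f (P ∘ σ) = f P

/-- `f` behaves like a dictatorship on `B`. -/
def DictatorOn (D : Set (Pref A)) {n : ℕ} (f : (Fin n → Pref A) → A) (B : Set A) : Prop :=
  ∃ i : Fin n, ∀ P : Fin n → Pref A, InDom D P → (∀ j, peak (P j) ∈ B) → f P = peak (P i)

/-- `f` is a dictatorship. -/
def Dictatorship (D : Set (Pref A)) {n : ℕ} (f : (Fin n → Pref A) → A) : Prop :=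
  DictatorOn D f Set.univ

/-- A dictatorial domain. -/
def DictatorialDomain (D : Set (Pref A)) : Prop :=
  ∀ n : ℕ, 2 ≤ n → ∀ f : (Fin n → Pref A) → A,
    IsRule D f → StrategyProof D f → Dictatorship D f

/-- A tops-only domain. -/
def TopsOnlyDomain (D : Set (Pref A)) : Prop :=
  ∀ n : ℕ, 2 ≤ n → ∀ f : (Fin n → Pref A) → A,
    IsRule D f → StrategyProof D f → TopsOnly D f

/-- Adjacency of two alternatives relative to the domain `D`. -/
def DomAdjacent (D : Set (Pref A)) (a b : A) : Prop :=
  ∃ P ∈ D, ∃ P' ∈ D, peak P = a ∧ second P = b ∧ peak P' = b ∧ second P' = a ∧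
    ∀ k : ℕ, 2 ≤ k → rk P k = rk P' k

/-- The adjacency graph `G_∼` of the domain `D`. -/
noncomputable def adjGraph (D : Set (Pref A)) : SimpleGraph A :=
  SimpleGraph.fromRel (DomAdjacent D)

/-- Path-connectedness of the domain. -/
def PathConnectedDom (D : Set (Pref A)) : Prop := (adjGraph D).Connected

/-- Diversity: the domain contains two completely reversed preferences. -/
def Diversity (D : Set (Pref A)) : Prop := ∃ P ∈ D, ∃ P' ∈ D, Reversed P P'

/-- `S(D^a)`: the set of alternatives second-ranked in some preference of `D` with peak `a`. -/
def secondsSet (D : Set (Pref A)) (a : A) : Set A := {b | ∃ P ∈ D, peak P = a ∧ second P = b}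

/-- Leaf symmetry. -/
def LeafSymmetry (D : Set (Pref A)) : Prop :=
  ∀ x : A, (∃! y, (adjGraph D).Adj x y) →
    (∃ u ∈ secondsSet D x, ∃ v ∈ secondsSet D x, u ≠ v) →
    ∃ z ∈ secondsSet D x, ¬ (adjGraph D).Adj x z ∧ x ∈ secondsSet D z

/-- Unidimensionality: path-connectedness, diversity and leaf symmetry. -/
def Unidimensional (D : Set (Pref A)) : Prop :=
  PathConnectedDom D ∧ Diversity D ∧ LeafSymmetry D

/-- The unique seconds property. -/
def UniqueSeconds (D : Set (Pref A)) : Prop := ∃ x b : A, secondsSet D x = {b}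

/-- Minimal richness. -/
def MinimallyRich (D : Set (Pref A)) : Prop := ∀ a : A, ∃ P ∈ D, peak P = a

/-- The vertex set `⟨x, y|T⟩` of the (in a tree, unique) shortest path between `x` and `y`. -/
def intv (T : SimpleGraph A) (x y : A) : Set A :=
  {z | T.dist x z + T.dist z y = T.dist x y}

/-- `a'` is the projection of `a` onto `B` in `T`. -/
def IsProjPt (T : SimpleGraph A) (B : Set A) (a a' : A) : Prop :=
  a' ∈ B ∧ ∀ b ∈ B, a' ∈ intv T a b

/-- The projection `Proj(a, B)` of `a` onto a path-closed set `B` in the tree `T`. -/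
noncomputable def projOn (T : SimpleGraph A) (B : Set A) (a : A) : A :=
  if h : ∃ a', IsProjPt T B a a' then h.choose else a

/-- `Γ(P)`: the vertex set of the minimal subtree of `T` spanning all the peaks. -/
def gammaSet (T : SimpleGraph A) {n : ℕ} (P : Fin n → Pref A) : Set A :=
  {c | ∃ i j : Fin n, c ∈ intv T (peak (P i)) (peak (P j))}

/-- The projection rule on `T` w.r.t. `xbar`. -/
noncomputable def projRule (T : SimpleGraph A) (xbar : A) {n : ℕ}
    (P : Fin n → Pref A) : A :=
  projOn T (gammaSet T P) xbar

/-- Single-peakedness on a tree. -/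
def SinglePeaked (T : SimpleGraph A) (P : Pref A) : Prop :=
  ∀ c d : A, c ≠ d → c ∈ intv T (peak P) d → prefers P c d

/-- Semi-single-peakedness on `T` w.r.t. the threshold `xbar`. -/
def SemiSP (T : SimpleGraph A) (xbar : A) (P : Pref A) : Prop :=
  (∀ c d : A, c ∈ intv T (peak P) xbar → d ∈ intv T (peak P) xbar → c ≠ d →
    c ∈ intv T (peak P) d → prefers P c d) ∧
  (∀ c : A, c ∉ intv T (peak P) xbar →
    prefers P (projOn T (intv T (peak P) xbar) c) c)

/-- A semi-single-peaked domain. -/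
def SemiSPDomain (D : Set (Pref A)) : Prop :=
  ∃ (T : SimpleGraph A) (xbar : A), T.IsTree ∧
    D ⊆ {P | SemiSP T xbar P} ∧ (adjGraph D).Connected

/-- `A^{a⇀b}`: the alternatives whose path to `b` goes through `a`. -/
def sideSet (T : SimpleGraph A) (a b : A) : Set A := {z | a ∈ intv T z b}

/-- `x = max^P(B)`: `x` is `P`'s best alternative of `B`. -/
def IsBestOf (P : Pref A) (x : A) (B : Set A) : Prop :=
  x ∈ B ∧ ∀ y ∈ B, y ≠ x → prefers P x y

/-- `a` and `b` are dual-thresholds in the tree `T`. -/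
def DualThresholds (T : SimpleGraph A) (a b : A) : Prop :=
  a ≠ b ∧ ∀ c : A, c ∉ intv T a b →
    projOn T (intv T a b) c = a ∨ projOn T (intv T a b) c = b

/-- An `(a,b)`-semi-hybrid preference on `T`. -/
def SemiHybridPref (T : SimpleGraph A) (a b : A) (P : Pref A) : Prop :=
  (peak P ∈ sideSet T a b \ {a} → SemiSP T a P ∧ IsBestOf P b (sideSet T b a)) ∧
  (peak P ∈ sideSet T b a \ {b} → SemiSP T b P ∧ IsBestOf P a (sideSet T a b)) ∧
  (peak P ∈ intv T a b → IsBestOf P a (sideSet T a b) ∧ IsBestOf P b (sideSet T b a))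

/-- `x` is a leaf of the subgraph of `G` induced on `B`. -/
def IsLeafOn (G : SimpleGraph A) (B : Set A) (x : A) : Prop :=
  x ∈ B ∧ ∃! y, y ∈ B ∧ G.Adj x y

/-- `D` is an `(a,b)`-semi-hybrid domain on the tree `T`. -/
def SemiHybridDomainOn (D : Set (Pref A)) (T : SimpleGraph A) (a b : A) : Prop :=
  T.IsTree ∧ DualThresholds T a b ∧ D ⊆ {P | SemiHybridPref T a b P} ∧
  (adjGraph D).Connected ∧
  (¬ ∃ (T' : SimpleGraph A) (a' b' : A), T'.IsTree ∧ DualThresholds T' a' b' ∧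
      D ⊆ {P | SemiHybridPref T' a' b' P} ∧ intv T' a' b' ⊂ intv T a b) ∧
  ((adjGraph D).IsTree →
    ∀ x : A, IsLeafOn (adjGraph D) (intv T a b) x →
      ∃ P ∈ D, ¬ SemiSP (adjGraph D) x P)

/-- `D` is a semi-hybrid domain. -/
def SemiHybridDomain (D : Set (Pref A)) : Prop :=
  ∃ (T : SimpleGraph A) (a b : A), SemiHybridDomainOn D T a b

/-- An `(a,b)`-hybrid preference on `T`. -/
def HybridPref (T : SimpleGraph A) (a b : A) (P : Pref A) : Prop :=
  (∀ y z : A, ((y ∈ sideSet T a b ∧ z ∈ sideSet T a b) ∨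
      (y ∈ sideSet T b a ∧ z ∈ sideSet T b a)) → y ≠ z →
    y ∈ intv T (peak P) z → prefers P y z) ∧
  (peak P ∈ sideSet T a b \ {a} → IsBestOf P a (intv T a b)) ∧
  (peak P ∈ sideSet T b a \ {b} → IsBestOf P b (intv T a b))

/-- `D` is an `(a,b)`-hybrid domain on the tree `T`. -/
def HybridDomainOn (D : Set (Pref A)) (T : SimpleGraph A) (a b : A) : Prop :=
  T.IsTree ∧ DualThresholds T a b ∧ D ⊆ {P | HybridPref T a b P} ∧
  (adjGraph D).Connected ∧
  (¬ ∃ (T' : SimpleGraph A) (a' b' : A), T'.IsTree ∧ DualThresholds T' a' b' ∧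
      D ⊆ {P | HybridPref T' a' b' P} ∧ intv T' a' b' ⊂ intv T a b) ∧
  3 ≤ (intv T a b).ncard

/-- `f` is an `(a,b)`-hybrid rule on the tree `T`. -/
def IsHybridRule (D : Set (Pref A)) {n : ℕ} (f : (Fin n → Pref A) → A)
    (T : SimpleGraph A) (a b : A) : Prop :=
  T.IsTree ∧ DualThresholds T a b ∧ 3 ≤ (intv T a b).ncard ∧
  ∃ i : Fin n, ∀ P : Fin n → Pref A, InDom D P →
    (peak (P i) ∈ intv T a b → f P = peak (P i)) ∧
    (peak (P i) ∈ sideSet T a b \ {a} → f P = projOn T (gammaSet T P) a) ∧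
    (peak (P i) ∈ sideSet T b a \ {b} → f P = projOn T (gammaSet T P) b)

/-- The PNT rule on `T` w.r.t. the edge `(x, y)`, with the two distinguished voters `i, j`. -/
noncomputable def pntRule (T : SimpleGraph A) (x y : A) {n : ℕ} (i j : Fin n)
    (P : Fin n → Pref A) : A :=
  if peak (P i) ∈ sideSet T y x then peak (P i)
  else if peak (P j) ∈ sideSet T x y then projOn T (gammaSet T P) x
  else if prefers (P j) x y then x else y

/-- `(x, y)` is a critical spot in `T` for the domain `D`. -/
def CriticalSpot (D : Set (Pref A)) (T : SimpleGraph A) (x y : A) : Prop :=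
  T.Adj x y ∧
  (∀ P ∈ D, peak P ∈ sideSet T x y → SemiSP T y P) ∧
  (∀ P ∈ D, peak P ∈ sideSet T y x → IsBestOf P x (sideSet T x y)) ∧
  (∃ P ∈ D, ∃ P' ∈ D, peak P = peak P' ∧ peak P ∈ sideSet T y x ∧
    prefers P y x ∧ prefers P' x y)

/-- `x` is a path in the graph `G` (pairwise distinct, consecutive vertices adjacent). -/
def IsPathIn (G : SimpleGraph A) {v : ℕ} (x : Fin v → A) : Prop :=
  Function.Injective x ∧
  ∀ (k : ℕ) (h : k + 1 < v), G.Adj (x ⟨k, Nat.lt_of_succ_lt h⟩) (x ⟨k + 1, h⟩)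

/-- `x` is a cycle in the graph `G`. -/
def IsCycleIn (G : SimpleGraph A) {v : ℕ} (x : Fin v → A) : Prop :=
  Function.Injective x ∧
  (∀ (k : ℕ) (h : k + 1 < v), G.Adj (x ⟨k, Nat.lt_of_succ_lt h⟩) (x ⟨k + 1, h⟩)) ∧
  ∀ (h : 0 < v), G.Adj (x ⟨v - 1, Nat.sub_lt h Nat.one_pos⟩) (x ⟨0, h⟩)

/-- The line `L^A` induced by the ranking of the preference `P`. -/
noncomputable def lineOf (P : Pref A) : SimpleGraph A :=
  SimpleGraph.fromRel (fun a b =>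
    ∃ k : ℕ, k + 1 < Fintype.card A ∧ rk P k = a ∧ rk P (k + 1) = b)

/-- The median of three natural numbers. -/
def med3 (a b c : ℕ) : ℕ := max (min a b) (min (max a b) c)

/-- The two-voter profile in which voter `i` reports `Pi` and the other voter reports `Q`. -/
noncomputable def prof2 (i : Fin 2) (Pi Q : Pref A) : Fin 2 → Pref A :=
  Function.update (fun _ => Q) i Pi

/-!
Work with two-voter profiles `prof2 i P Q`, in which voter `i` reports `P`. Call `B` a
dictatorial region of voter `i` if `i` dictates on `B`, `B` has two alternatives and induces a
connected subgraph of `G_∼`. Strategy-proofness forces such a region to grow across any edge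
`x ∼ y` leaving it (`x ∈ B`), unless the edge is *blocked*: against the other voter's
preference with peak `x` and second `y`, voter `i` can never obtain `y`. A block on `x ∼ u`
propagates to every edge `u ∼ u'` with `u' ≠ x`, so it travels forward along a path; yet no
block can point into a region dictated by `i`, and two opposite blocks of the two voters cannot
sit on the same edge.

Grow `Ā` along the path. If the same voter dictates on `Â`, the path cannot get blocked, and
the grown region merges with `Â`. If different voters dictate on `Ā` and `Â`, grow both regions
towards each other: either they overlap on an edge, where the two dictatorships contradict each
other, or opposite blocks meet on a common edge.
-/

lemma rk_symm (P : Pref A) (a : A) : rk P (P.symm a) = a := by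
  simp [rk]

lemma symm_val_eq_of_rk {P : Pref A} {a : A} {k : ℕ} (hk : k < Fintype.card A)
    (h : rk P k = a) : (P.symm a : ℕ) = k := by
  subst h
  simp [rk, hk]

lemma prefers_iff {P : Pref A} {a b : A} : prefers P a b ↔ (P.symm a : ℕ) < P.symm b :=
  Iff.rfl

lemma not_prefers_peak (P : Pref A) (a : A) : ¬ prefers P a (peak P) := by
  have : (P.symm (peak P) : ℕ) = 0 := symm_val_eq_of_rk Fintype.card_pos rfl
  rw [prefers_iff, this]
  omega

structure IsAdjPair (D : Set (Pref A)) (P P' : Pref A) (x y : A) : Prop where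
  mem : P ∈ D
  mem' : P' ∈ D
  peak_eq : peak P = x
  second_eq : second P = y
  peak_eq' : peak P' = y
  second_eq' : second P' = x
  rk_eq : ∀ k, 2 ≤ k → rk P k = rk P' k
  ne : x ≠ y

lemma exists_isAdjPair {D : Set (Pref A)} {x y : A} (h : (adjGraph D).Adj x y) :
    ∃ P P', IsAdjPair D P P' x y := by
  obtain ⟨hne, h | h⟩ := (SimpleGraph.fromRel_adj _ _ _).1 h
  · obtain ⟨P, hP, P', hP', h1, h2, h3, h4, h5⟩ := h
    exact ⟨P, P', hP, hP', h1, h2, h3, h4, h5, hne⟩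
  · obtain ⟨P, hP, P', hP', h1, h2, h3, h4, h5⟩ := h
    exact ⟨P', P, hP', hP, h3, h4, h1, h2, fun k hk => (h5 k hk).symm, hne⟩

namespace IsAdjPair

variable {D : Set (Pref A)} {P P' : Pref A} {x y a b : A}

lemma symm (h : IsAdjPair D P P' x y) : IsAdjPair D P' P y x :=
  ⟨h.mem', h.mem, h.peak_eq', h.second_eq', h.peak_eq, h.second_eq,
    fun k hk => (h.rk_eq k hk).symm, h.ne.symm⟩

lemma rank_fst (h : IsAdjPair D P P' x y) : (P.symm x : ℕ) = 0 :=
  symm_val_eq_of_rk Fintype.card_pos h.peak_eq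

lemma rank_snd (h : IsAdjPair D P P' x y) : (P.symm y : ℕ) = 1 :=
  symm_val_eq_of_rk (Fintype.one_lt_card_iff.2 ⟨x, y, h.ne⟩) h.second_eq

lemma rank_of_ne (h : IsAdjPair D P P' x y) (hx : a ≠ x) (hy : a ≠ y) :
    2 ≤ (P.symm a : ℕ) ∧ (P'.symm a : ℕ) = P.symm a := by
  have h0 : (P.symm a : ℕ) ≠ 0 := fun h0 => hx <| by
    have := rk_symm P a
    rw [h0] at this
    exact this.symm.trans h.peak_eq
  have h1 : (P.symm a : ℕ) ≠ 1 := fun h1 => hy <| by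
    have := rk_symm P a
    rw [h1] at this
    exact this.symm.trans h.second_eq
  refine ⟨by omega, symm_val_eq_of_rk (P.symm a).isLt ?_⟩
  rw [← h.rk_eq _ (by omega), rk_symm]

lemma prefers_snd (h : IsAdjPair D P P' x y) (hx : b ≠ x) (hy : b ≠ y) : prefers P y b := by
  rw [prefers_iff, h.rank_snd]
  have := (h.rank_of_ne hx hy).1
  omega

lemma eq_fst_of_prefers_snd (h : IsAdjPair D P P' x y) (ha : prefers P a y) : a = x := by
  by_contra hax
  rcases eq_or_ne a y with rfl | hay
  · exact lt_irrefl _ ha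
  · rw [prefers_iff, h.rank_snd] at ha
    have := (h.rank_of_ne hax hay).1
    omega

lemma eq_of_prefers_of_prefers (h : IsAdjPair D P P' x y) (hab : prefers P a b)
    (hba : prefers P' b a) : a = x ∧ b = y := by
  rcases eq_or_ne a x with rfl | hax
  · exact ⟨rfl, h.symm.eq_fst_of_prefers_snd hba⟩
  rcases eq_or_ne b y with rfl | hby
  · exact absurd (h.eq_fst_of_prefers_snd hab) hax
  rw [prefers_iff] at hab hba
  rcases eq_or_ne a y with rfl | hay
  · have := h.symm.rank_fst
    omega
  rcases eq_or_ne b x with rfl | hbx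
  · have := h.rank_fst
    omega
  have ha := h.rank_of_ne hax hay
  have hb := h.rank_of_ne hbx hby
  omega

end IsAdjPair

lemma SimpleGraph.Preconnected.induce_induction {V : Type*} {G : SimpleGraph V} {s : Set V}
    (hs : (G.induce s).Preconnected) {p : V → Prop}
    (hp : ∀ u v, u ∈ s → v ∈ s → G.Adj u v → p u → p v) {a b : V} (ha : a ∈ s)
    (hb : b ∈ s) (hpa : p a) : p b := by
  obtain ⟨w⟩ := hs ⟨a, ha⟩ ⟨b, hb⟩
  suffices ∀ u v : s, (G.induce s).Walk u v → p u → p v from this _ _ w hpa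
  intro u v w
  induction w with
  | nil => exact id
  | cons huv _ ih => exact fun hu => ih (hp _ _ (Subtype.prop _) (Subtype.prop _) huv hu)

lemma IsPathIn.adj_clamp {G : SimpleGraph A} {n : ℕ} {x : Fin (n + 1) → A}
    (h : IsPathIn G x) : ∀ k < n, G.Adj (x (Fin.clamp k n)) (x (Fin.clamp (k + 1) n)) := by
  intro k hk
  convert h.2 k (by omega) using 2 <;> ext <;> simp only [Fin.coe_clamp] <;> omega

lemma IsPathIn.clamp_add_two_ne {G : SimpleGraph A} {n : ℕ} {x : Fin (n + 1) → A}
    (h : IsPathIn G x) : ∀ k, k + 2 ≤ n → x (Fin.clamp (k + 2) n) ≠ x (Fin.clamp k n) := by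
  intro k hk he
  have := congrArg Fin.val (h.1 he)
  simp only [Fin.coe_clamp] at this
  omega

lemma fin_two_eq_of_ne {i j k : Fin 2} (hj : j ≠ i) (hk : k ≠ i) : k = j := by
  omega

@[simp] lemma prof2_self (i : Fin 2) (P Q : Pref A) : prof2 i P Q i = P := by
  simp [prof2]

lemma prof2_of_ne {i j : Fin 2} (h : j ≠ i) (P Q : Pref A) : prof2 i P Q j = Q := by
  simp [prof2, h]

lemma prof2_comm {i j : Fin 2} (h : j ≠ i) (P Q : Pref A) : prof2 j Q P = prof2 i P Q := by
  funext k
  by_cases hk : k = i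
  · subst hk
    rw [prof2_of_ne h.symm, prof2_self]
  · rw [fin_two_eq_of_ne h hk, prof2_self, prof2_of_ne h]

lemma prof2_eta {i j : Fin 2} (h : j ≠ i) (P : Fin 2 → Pref A) : prof2 i (P i) (P j) = P := by
  funext k
  by_cases hk : k = i
  · subst hk
    simp
  · rw [fin_two_eq_of_ne h hk, prof2_of_ne h]

lemma update_prof2_self (i : Fin 2) (P Q R : Pref A) :
    Function.update (prof2 i P Q) i R = prof2 i R Q := by
  simp [prof2]

lemma update_prof2_of_ne {i j : Fin 2} (h : j ≠ i) (P Q R : Pref A) :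
    Function.update (prof2 i P Q) j R = prof2 i P R := by
  rw [← prof2_comm h, ← prof2_comm h, update_prof2_self]

lemma forall_prof2 {p : Pref A → Prop} {i : Fin 2} {P Q : Pref A} (hP : p P) (hQ : p Q) :
    ∀ k, p (prof2 i P Q k) := by
  intro k
  by_cases hk : k = i
  · subst hk
    simpa using hP
  · rwa [prof2_of_ne hk]

section Rules

variable {D : Set (Pref A)} {f : (Fin 2 → Pref A) → A} {i : Fin 2} {P P' Q S : Pref A}
  {x y a : A}

lemma IsRule.apply_prof2 (hrule : IsRule D f) (hP : P ∈ D) (hQ : Q ∈ D) (hp : peak P = a)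
    (hq : peak Q = a) : f (prof2 i P Q) = a :=
  hrule _ (forall_prof2 hP hQ) a (forall_prof2 (p := (peak · = a)) hp hq)

lemma StrategyProof.deviate (hsp : StrategyProof D f) (hP : P ∈ D) (hQ : Q ∈ D) (hS : S ∈ D) :
    f (prof2 i P Q) = f (prof2 i S Q) ∨ prefers P (f (prof2 i P Q)) (f (prof2 i S Q)) := by
  have := hsp (prof2 i P Q) (forall_prof2 hP hQ) i S hS
  rwa [update_prof2_self, prof2_self] at this

lemma StrategyProof.deviate_other (hsp : StrategyProof D f) (hP : P ∈ D) (hQ : Q ∈ D)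
    (hS : S ∈ D) :
    f (prof2 i P Q) = f (prof2 i P S) ∨ prefers Q (f (prof2 i P Q)) (f (prof2 i P S)) := by
  obtain ⟨j, hj⟩ := exists_ne i
  have := hsp (prof2 i P Q) (forall_prof2 hP hQ) j S hS
  rwa [update_prof2_of_ne hj, prof2_of_ne hj] at this

lemma StrategyProof.eq_peak_of_eq_peak (hsp : StrategyProof D f) (hP : P ∈ D) (hQ : Q ∈ D)
    (hS : S ∈ D) (hp : peak P = a) (h : f (prof2 i S Q) = a) : f (prof2 i P Q) = a := by
  subst hp
  rcases hsp.deviate hP hQ hS with he | he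
  · rw [he, h]
  · rw [h] at he
    exact absurd he (not_prefers_peak P _)

lemma StrategyProof.eq_peak_of_eq_peak_other (hsp : StrategyProof D f) (hP : P ∈ D)
    (hQ : Q ∈ D) (hS : S ∈ D) (hq : peak Q = a) (h : f (prof2 i P S) = a) :
    f (prof2 i P Q) = a := by
  obtain ⟨j, hj⟩ := exists_ne i
  rw [← prof2_comm hj] at h ⊢
  exact hsp.eq_peak_of_eq_peak hQ hP hS hq h

lemma StrategyProof.eq_fst_or_eq_snd (hsp : StrategyProof D f) (hpair : IsAdjPair D P P' x y)
    (hQ : Q ∈ D) (hS : S ∈ D) (h : f (prof2 i S Q) = y) :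
    f (prof2 i P Q) = x ∨ f (prof2 i P Q) = y := by
  rcases hsp.deviate hpair.mem hQ hS with he | he
  · exact Or.inr (he.trans h)
  · rw [h] at he
    exact Or.inl (hpair.eq_fst_of_prefers_snd he)

lemma StrategyProof.swap_other (hsp : StrategyProof D f) (hpair : IsAdjPair D P P' x y)
    (hS : S ∈ D) :
    f (prof2 i S P') = f (prof2 i S P) ∨ (f (prof2 i S P) = x ∧ f (prof2 i S P') = y) := by
  rcases hsp.deviate_other hS hpair.mem hpair.mem' with he | he
  · exact Or.inl he.symm
  rcases hsp.deviate_other hS hpair.mem' hpair.mem with he' | he'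
  · exact Or.inl he'
  exact Or.inr (hpair.eq_of_prefers_of_prefers he he')

lemma StrategyProof.swap (hsp : StrategyProof D f) (hpair : IsAdjPair D P P' x y)
    (hS : S ∈ D) :
    f (prof2 i P' S) = f (prof2 i P S) ∨ (f (prof2 i P S) = x ∧ f (prof2 i P' S) = y) := by
  obtain ⟨j, hj⟩ := exists_ne i
  simp only [← prof2_comm hj]
  exact hsp.swap_other hpair hS

end Rules

def DictatesOn (D : Set (Pref A)) (f : (Fin 2 → Pref A) → A) (i : Fin 2) (B : Set A) : Prop :=
  ∀ P ∈ D, ∀ Q ∈ D, peak P ∈ B → peak Q ∈ B → f (prof2 i P Q) = peak P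

structure DictRegion (D : Set (Pref A)) (f : (Fin 2 → Pref A) → A) (i : Fin 2) (B : Set A) :
    Prop where
  dictatesOn : DictatesOn D f i B
  connected : ((adjGraph D).induce B).Connected
  nontrivial : B.Nontrivial

def Blocked (D : Set (Pref A)) (f : (Fin 2 → Pref A) → A) (i : Fin 2) (x y : A) : Prop :=
  ∀ P P', IsAdjPair D P P' x y → ∀ S ∈ D, f (prof2 i S P) ≠ y

section Regions

variable {D : Set (Pref A)} {f : (Fin 2 → Pref A) → A} {i j : Fin 2} {B C : Set A}
  {P Q R : Pref A} {a b s t x y u v z : A}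

lemma DictatesOn.apply_eq (h : DictatesOn D f i B) (hP : P ∈ D) (hQ : Q ∈ D) (hp : peak P = a)
    (hq : peak Q = b) (ha : a ∈ B) (hb : b ∈ B) : f (prof2 i P Q) = a := by
  subst hp hq
  exact h P hP Q hQ ha hb

lemma DictatesOn.mono (h : DictatesOn D f i B) (hCB : C ⊆ B) : DictatesOn D f i C :=
  fun P hP Q hQ hp hq => h P hP Q hQ (hCB hp) (hCB hq)

lemma dictatorOn_iff : DictatorOn D f B ↔ ∃ i, DictatesOn D f i B := by
  constructor
  · rintro ⟨i, h⟩
    refine ⟨i, fun P hP Q hQ hp hq => ?_⟩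
    simpa using h (prof2 i P Q) (forall_prof2 hP hQ) (forall_prof2 (p := (peak · ∈ B)) hp hq)
  · rintro ⟨i, h⟩
    obtain ⟨j, hj⟩ := exists_ne i
    refine ⟨i, fun P hP hpk => ?_⟩
    rw [← prof2_eta hj P]
    simpa using h _ (hP i) _ (hP j) (hpk i) (hpk j)

namespace DictRegion

lemma exists_adj (hB : DictRegion D f i B) (hz : z ∈ B) : ∃ a ∈ B, (adjGraph D).Adj z a := by
  have := Set.nontrivial_coe_sort.2 hB.nontrivial
  obtain ⟨a, ha⟩ := hB.connected.preconnected.exists_adj_of_nontrivial ⟨z, hz⟩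
  exact ⟨a, a.2, SimpleGraph.induce_adj.1 ha⟩

lemma eq_peak_of_mem (hsp : StrategyProof D f) (hB : DictRegion D f i B) (hQ : Q ∈ D)
    (hR : R ∈ D) (hq : peak Q ∈ B) (hmem : f (prof2 i Q R) ∈ B) :
    f (prof2 i Q R) = peak Q := by
  obtain ⟨a, -, hadj⟩ := hB.exists_adj hmem
  obtain ⟨T, T', hT⟩ := exists_isAdjPair hadj
  rw [← hsp.eq_peak_of_eq_peak_other hQ hT.mem hR hT.peak_eq rfl]
  exact hB.dictatesOn Q hQ T hT.mem hq (hT.peak_eq ▸ hmem)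

lemma apply_ne_of_adj_of_not_mem (hsp : StrategyProof D f) (hB : DictRegion D f i B) (hx : x ∈ B)
    (hxy : (adjGraph D).Adj x y) (hy : y ∉ B) (hQ : Q ∈ D) (hq : peak Q = x) (hR : R ∈ D) :
    f (prof2 i Q R) ≠ y := by
  obtain ⟨P, P', hp⟩ := exists_isAdjPair hxy
  obtain ⟨a, ha, hxa⟩ := hB.exists_adj hx
  obtain ⟨T, T', hT⟩ := exists_isAdjPair hxa
  have hTP : f (prof2 i T P) = x := hB.dictatesOn.apply_eq hT.mem hp.mem hT.peak_eq hp.peak_eq hx hx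
  have hT'P : f (prof2 i T' P) = a :=
    hB.dictatesOn.apply_eq hT.mem' hp.mem hT.peak_eq' hp.peak_eq ha hx
  have hT'P' : f (prof2 i T' P') = a := by
    rcases hsp.swap_other hp hT.mem' with he | ⟨he, -⟩
    · rw [he, hT'P]
    · exact absurd (hT'P.symm.trans he) hT.ne.symm
  have hTP' : f (prof2 i T P') = x := by
    rcases hsp.swap_other hp hT.mem with he | ⟨-, he⟩
    · rw [he, hTP]
    · -- with preference `T` (peak `x`, second `a`), reporting `T'` would secure `a` instead of `y`
      exfalso
      rcases hsp.deviate hT.mem hp.mem' hT.mem' with he' | he'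
      · rw [he, hT'P'] at he'
        exact hy (he' ▸ ha)
      · rw [he, hT'P'] at he'
        exact lt_asymm he' (hT.prefers_snd hp.ne.symm (fun h => hy (h ▸ ha)))
  intro h
  have hy' := hsp.eq_peak_of_eq_peak_other hQ hp.mem' hR hp.peak_eq' h
  exact hp.ne ((hsp.eq_peak_of_eq_peak hQ hp.mem' hT.mem hq hTP').symm.trans hy')

lemma apply_eq_of_adj_of_not_mem (hrule : IsRule D f) (hsp : StrategyProof D f)
    (hB : DictRegion D f i B) (hx : x ∈ B) (hxy : (adjGraph D).Adj x y) (hy : y ∉ B)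
    (hQ : Q ∈ D) (hq : peak Q = x) (hR : R ∈ D) (hr : peak R = y) : f (prof2 i Q R) = x := by
  obtain ⟨P, P', hp⟩ := exists_isAdjPair hxy
  have hy' : f (prof2 i P' R) = y := hrule.apply_prof2 hp.mem' hR hp.peak_eq' hr
  have hx' : f (prof2 i P R) = x := by
    rcases hsp.swap hp.symm hR with he | ⟨-, he⟩
    · exact absurd (he.trans hy')
        (hB.apply_ne_of_adj_of_not_mem hsp hx hxy hy hp.mem hp.peak_eq hR)
    · exact he
  exact hsp.eq_peak_of_eq_peak hQ hR hp.mem hq hx'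

lemma apply_eq_of_mem_of_adj_of_not_mem (hrule : IsRule D f) (hsp : StrategyProof D f)
    (hB : DictRegion D f i B) (hx : x ∈ B) (hxy : (adjGraph D).Adj x y) (hy : y ∉ B)
    (hz : z ∈ B) (hQ : Q ∈ D) (hq : peak Q = z) (hR : R ∈ D) (hr : peak R = y) :
    f (prof2 i Q R) = z := by
  suffices ∀ Q ∈ D, peak Q = z → f (prof2 i Q R) = z from this Q hQ hq
  refine hB.connected.preconnected.induce_induction
    (p := fun z => ∀ Q ∈ D, peak Q = z → f (prof2 i Q R) = z) ?_ hx hz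
    fun Q hQ hq => hB.apply_eq_of_adj_of_not_mem hrule hsp hx hxy hy hQ hq hR hr
  intro b c _ hc hbc ih Q hQ hq
  obtain ⟨P, P', hp⟩ := exists_isAdjPair hbc.symm
  have hPR : f (prof2 i P R) = c := by
    have hmem : f (prof2 i P R) ∈ B := by
      rcases hsp.eq_fst_or_eq_snd hp hR hp.mem' (ih P' hp.mem' hp.peak_eq') with h | h <;>
        rw [h] <;> assumption
    rw [hB.eq_peak_of_mem hsp hp.mem hR (hp.peak_eq ▸ hc) hmem, hp.peak_eq]
  exact hsp.eq_peak_of_eq_peak hQ hR hp.mem hq hPR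

lemma apply_eq_of_adj (hrule : IsRule D f) (hsp : StrategyProof D f) (hB : DictRegion D f i B)
    (hs : s ∈ B) (hst : (adjGraph D).Adj s t) (hQ : Q ∈ D) (hq : peak Q = s) (hR : R ∈ D)
    (hr : peak R = t) : f (prof2 i Q R) = s := by
  by_cases ht : t ∈ B
  · exact hB.dictatesOn.apply_eq hQ hR hq hr hs ht
  · exact hB.apply_eq_of_adj_of_not_mem hrule hsp hs hst ht hQ hq hR hr

lemma dictatesOn_insert (hrule : IsRule D f) (hsp : StrategyProof D f)
    (hB : DictRegion D f i B) (hx : x ∈ B) (hxy : (adjGraph D).Adj x y) (hy : y ∉ B)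
    (hnb : ¬ Blocked D f i x y) : DictatesOn D f i (insert y B) := by
  obtain ⟨P, P', hp, S, hS, hSy⟩ :
      ∃ P P', IsAdjPair D P P' x y ∧ ∃ S ∈ D, f (prof2 i S P) = y := by
    by_contra! hcon
    exact hnb hcon
  have hP'P : f (prof2 i P' P) = y := hsp.eq_peak_of_eq_peak hp.mem' hp.mem hS hp.peak_eq' hSy
  have hrow : ∀ Q ∈ D, peak Q ∈ B → f (prof2 i P' Q) = y := by
    intro Q hQ hq
    rcases hsp.swap hp hQ with he | ⟨-, he⟩
    · have hx' := he.trans (hB.dictatesOn.apply_eq hp.mem hQ hp.peak_eq rfl hx hq)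
      have := hsp.eq_peak_of_eq_peak_other hp.mem' hp.mem hQ hp.peak_eq hx'
      exact absurd (hP'P.symm.trans this) hp.ne.symm
    · exact he
  intro Q hQ R hR hq hr
  rcases Set.mem_insert_iff.1 hq with hq | hq <;> rcases Set.mem_insert_iff.1 hr with hr | hr
  · rw [hq]
    exact hrule.apply_prof2 hQ hR hq hr
  · rw [hq]
    exact hsp.eq_peak_of_eq_peak hQ hR hp.mem' hq (hrow R hR hr)
  · exact hB.apply_eq_of_mem_of_adj_of_not_mem hrule hsp hx hxy hy hq hQ rfl hR hr
  · exact hB.dictatesOn Q hQ R hR hq hr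

lemma insert_of_not_blocked (hrule : IsRule D f) (hsp : StrategyProof D f) (hB : DictRegion D f i B)
    (hx : x ∈ B) (hxy : (adjGraph D).Adj x y) (hy : y ∉ B) (hnb : ¬ Blocked D f i x y) :
    DictRegion D f i (insert y B) where
  dictatesOn := hB.dictatesOn_insert hrule hsp hx hxy hy hnb
  connected := by
    rw [Set.insert_eq, Set.union_comm]
    exact SimpleGraph.connected_induce_union hB.connected.preconnected
      SimpleGraph.Preconnected.of_subsingleton hx rfl hxy
  nontrivial := hB.nontrivial.mono (Set.subset_insert _ _)

lemma not_blocked_of_mem (hrule : IsRule D f) (hsp : StrategyProof D f)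
    (hB : DictRegion D f i B) (hst : (adjGraph D).Adj s t) (ht : t ∈ B) :
    ¬ Blocked D f i s t := by
  intro hb
  obtain ⟨P, P', hp⟩ := exists_isAdjPair hst
  exact hb P P' hp P' hp.mem'
    (hB.apply_eq_of_adj hrule hsp ht hst.symm hp.mem' hp.peak_eq' hp.mem hp.peak_eq)

lemma false_of_dictatesOn (hrule : IsRule D f) (hsp : StrategyProof D f)
    (hB : DictRegion D f i B) (hC : DictatesOn D f j C) (hji : j ≠ i) (hsB : s ∈ B)
    (hsC : s ∈ C) (htC : t ∈ C) (hst : (adjGraph D).Adj s t) : False := by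
  obtain ⟨P, P', hp⟩ := exists_isAdjPair hst
  have hs := hB.apply_eq_of_adj hrule hsp hsB hst hp.mem hp.peak_eq hp.mem' hp.peak_eq'
  have ht := hC.apply_eq hp.mem' hp.mem hp.peak_eq' hp.peak_eq htC hsC
  rw [prof2_comm hji] at ht
  exact hp.ne (hs.symm.trans ht)

lemma dictatesOn_union (hrule : IsRule D f) (hsp : StrategyProof D f)
    (hB : DictRegion D f i B) (hC : DictRegion D f i C) (hBC : (B ∩ C).Nonempty) :
    DictatesOn D f i (B ∪ C) := by
  induction h : (C \ B).ncard generalizing B with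
  | zero =>
    rw [Set.union_eq_self_of_subset_right
      (Set.sdiff_eq_empty.1 ((Set.ncard_eq_zero (Set.toFinite _)).1 h))]
    exact hB.dictatesOn
  | succ n ih =>
    obtain ⟨s, hs, c, hcC, hc, hsc⟩ : ∃ s ∈ B, ∃ c ∈ C, c ∉ B ∧ (adjGraph D).Adj s c := by
      by_contra! hcl
      obtain ⟨c, hcC, hc⟩ := Set.nonempty_of_ncard_ne_zero (by rw [h]; exact n.succ_ne_zero)
      obtain ⟨a, haB, haC⟩ := hBC
      exact hc (hC.connected.preconnected.induce_induction (p := (· ∈ B))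
        (fun u v _ hv huv hub => by_contra fun hvB => hcl u hub v hv hvB huv) haC hcC haB)
    have hB' :=
      hB.insert_of_not_blocked hrule hsp hs hsc hc (hC.not_blocked_of_mem hrule hsp hsc hcC)
    have hcard : (C \ insert c B).ncard = n := by
      have hdiff : C \ insert c B = (C \ B) \ {c} := by
        ext
        simp only [Set.mem_sdiff, Set.mem_insert_iff, Set.mem_singleton_iff]
        tauto
      have := Set.ncard_sdiff_singleton_add_one (show c ∈ C \ B from ⟨hcC, hc⟩)
      rw [hdiff]
      omega
    have := ih hB' (hBC.mono (Set.inter_subset_inter_left _ (Set.subset_insert _ _))) hcard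
    rwa [Set.insert_union, Set.insert_eq_of_mem (Set.mem_union_right B hcC)] at this

end DictRegion

namespace Blocked

lemma next (hrule : IsRule D f) (hsp : StrategyProof D f) (hxu : (adjGraph D).Adj x u)
    (hvx : v ≠ x) (hb : Blocked D f i x u) :
    Blocked D f i u v := by
  intro P P' hp S hS hSv
  obtain ⟨R, R', hr⟩ := exists_isAdjPair hxu
  have hP'P : f (prof2 i P' P) = v := hsp.eq_peak_of_eq_peak hp.mem' hp.mem hS hp.peak_eq' hSv
  have hP'R' : f (prof2 i P' R') = v := by
    have hR'R' : f (prof2 i R' R') = u :=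
      hrule.apply_prof2 hr.mem' hr.mem' hr.peak_eq' hr.peak_eq'
    rcases hsp.eq_fst_or_eq_snd hp.symm hr.mem' hr.mem' hR'R' with h | h
    · exact h
    · have := hsp.eq_peak_of_eq_peak_other hp.mem' hp.mem hr.mem' hp.peak_eq h
      exact absurd (hP'P.symm.trans this) hp.ne.symm
  have hP'R : f (prof2 i P' R) = v := by
    rcases hsp.swap_other hr.symm hp.mem' with he | ⟨he, -⟩
    · exact he.trans hP'R'
    · exact absurd (hP'R'.symm.trans he) hp.ne.symm
  have hPR : f (prof2 i P R) = x := by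
    have hPR' : f (prof2 i P R') = u := hrule.apply_prof2 hp.mem hr.mem' hp.peak_eq hr.peak_eq'
    rcases hsp.swap_other hr.symm hp.mem with he | ⟨-, he⟩
    · exact absurd (he.trans hPR') (hb R R' hr P hp.mem)
    · exact he
  -- with preference `P` (peak `u`, second `v`), reporting `P'` against `R` would secure `v`
  rcases hsp.deviate hp.mem hr.mem hp.mem' with he | he
  · rw [hPR, hP'R] at he
    exact hvx he.symm
  · rw [hPR, hP'R] at he
    exact lt_asymm he (hp.prefers_snd hr.ne hvx.symm)

lemma false_of_reverse (hrule : IsRule D f) (hsp : StrategyProof D f) (hji : j ≠ i)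
    (hst : (adjGraph D).Adj s t) (hb : Blocked D f i s t) (hb' : Blocked D f j t s) : False := by
  obtain ⟨P, P', hp⟩ := exists_isAdjPair hst
  have ht : f (prof2 i P' P') = t := hrule.apply_prof2 hp.mem' hp.mem' hp.peak_eq' hp.peak_eq'
  rcases hsp.swap_other hp.symm hp.mem' with he | ⟨-, he⟩
  · exact hb P P' hp P' hp.mem' (he.trans ht)
  · exact hb' P' P hp.symm P hp.mem (by rw [prof2_comm hji]; exact he)

lemma propagate (hrule : IsRule D f) (hsp : StrategyProof D f) {w : ℕ → A} {n l k : ℕ}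
    (hadj : ∀ k < n, (adjGraph D).Adj (w k) (w (k + 1)))
    (hback : ∀ k, k + 2 ≤ n → w (k + 2) ≠ w k) (hb : Blocked D f i (w l) (w (l + 1)))
    (hlk : l ≤ k) (hk : k < n) : Blocked D f i (w k) (w (k + 1)) := by
  induction k, hlk using Nat.le_induction with
  | base => exact hb
  | succ k _ ih =>
    exact (ih (by omega)).next hrule hsp (hadj k (by omega)) (hback k hk)

end Blocked

namespace DictRegion

lemma grow_along (hrule : IsRule D f) (hsp : StrategyProof D f) (hB : DictRegion D f i B)
    {w : ℕ → A} {n : ℕ} (hadj : ∀ k < n, (adjGraph D).Adj (w k) (w (k + 1)))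
    (h0 : w 0 ∈ B) :
    (∃ B', DictRegion D f i B' ∧ B ⊆ B' ∧ ∀ k ≤ n, w k ∈ B') ∨
      ∃ l < n, Blocked D f i (w l) (w (l + 1)) ∧
        ∃ B', DictRegion D f i B' ∧ ∀ k ≤ l, w k ∈ B' := by
  induction n with
  | zero => exact Or.inl ⟨B, hB, subset_rfl, fun k hk => by rwa [Nat.le_zero.1 hk]⟩
  | succ n ih =>
    rcases ih fun k hk => hadj k (by omega) with ⟨B', hB', hBB', hmem⟩ | ⟨l, hl, hbl, hrest⟩
    · by_cases hbl : w (n + 1) ∉ B' ∧ Blocked D f i (w n) (w (n + 1))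
      · exact Or.inr ⟨n, by omega, hbl.2, B', hB', hmem⟩
      have hins : DictRegion D f i (insert (w (n + 1)) B') := by
        by_cases hin : w (n + 1) ∈ B'
        · rwa [Set.insert_eq_of_mem hin]
        · exact hB'.insert_of_not_blocked hrule hsp (hmem n le_rfl) (hadj n (by omega)) hin
            fun h => hbl ⟨hin, h⟩
      refine Or.inl ⟨_, hins, hBB'.trans (Set.subset_insert _ _), fun k hk => ?_⟩
      rcases Nat.le_succ_iff.1 hk with hk | rfl
      exacts [Set.mem_insert_of_mem _ (hmem k hk), Set.mem_insert _ _]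
    · exact Or.inr ⟨l, by omega, hbl, hrest⟩

lemma exists_dictatesOn_path (hrule : IsRule D f) (hsp : StrategyProof D f)
    (hB : DictRegion D f i B) (hC : DictRegion D f i C) {w : ℕ → A} {n : ℕ}
    (hadj : ∀ k < n, (adjGraph D).Adj (w k) (w (k + 1)))
    (hback : ∀ k, k + 2 ≤ n → w (k + 2) ≠ w k) (h0 : w 0 ∈ B) (hn : w n ∈ C) :
    ∃ B', DictatesOn D f i B' ∧ B ∪ C ⊆ B' ∧ ∀ k ≤ n, w k ∈ B' := by
  rcases hB.grow_along hrule hsp hadj h0 with ⟨B', hB', hBB', hmem⟩ | ⟨l, hl, hbl, -⟩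
  · exact ⟨B' ∪ C, hB'.dictatesOn_union hrule hsp hC ⟨w n, hmem n le_rfl, hn⟩,
      Set.union_subset_union_left C hBB', fun k hk => Or.inl (hmem k hk)⟩
  · obtain ⟨m, rfl⟩ : ∃ m, n = m + 1 := ⟨n - 1, by omega⟩
    exact absurd (hbl.propagate hrule hsp hadj hback (by omega : l ≤ m) (by omega))
      (hC.not_blocked_of_mem hrule hsp (hadj m (by omega)) hn)

lemma false_of_path (hrule : IsRule D f) (hsp : StrategyProof D f) (hB : DictRegion D f i B)
    (hC : DictRegion D f j C) (hji : j ≠ i) {w : ℕ → A} {n : ℕ}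
    (hadj : ∀ k < n, (adjGraph D).Adj (w k) (w (k + 1)))
    (hback : ∀ k, k + 2 ≤ n → w (k + 2) ≠ w k) (h0 : w 0 ∈ B) (hn : w n ∈ C) :
    False := by
  rcases hB.grow_along hrule hsp hadj h0 with
    ⟨B', hB', -, hmem⟩ | ⟨l, hl, hbl, B', hB', hmem⟩
  · obtain ⟨t, htC, hnt⟩ := hC.exists_adj hn
    exact hB'.false_of_dictatesOn hrule hsp hC.dictatesOn hji (hmem n le_rfl) hn htC hnt
  have hadj' : ∀ k < n, (adjGraph D).Adj (w (n - k)) (w (n - (k + 1))) := fun k hk => by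
    rw [show n - k = n - (k + 1) + 1 by omega]
    exact (hadj _ (by omega)).symm
  rcases hC.grow_along hrule hsp (w := fun k => w (n - k)) hadj' (by simpa using hn) with
    ⟨C', hC', -, hmem'⟩ | ⟨l', hl', hbl', C', hC', hmem'⟩
  · obtain ⟨t, htB, h0t⟩ := hB.exists_adj h0
    exact hC'.false_of_dictatesOn hrule hsp hB.dictatesOn hji.symm
      (by simpa using hmem' n le_rfl) h0 htB h0t
  by_cases hll : l + l' < n
  · -- the blocks of voter `i` reach the edge blocked by voter `j` in the opposite direction
    obtain ⟨m, hm⟩ : ∃ m, n - l' = m + 1 := ⟨n - (l' + 1), by omega⟩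
    rw [hm, show n - (l' + 1) = m by omega] at hbl'
    exact (hbl.propagate hrule hsp hadj hback (by omega : l ≤ m) (by omega)).false_of_reverse
      hrule hsp hji (hadj m (by omega)) hbl'
  · have hC'mem : ∀ k, n - l' ≤ k → k ≤ n → w k ∈ C' := fun k hk hkn => by
      simpa [Nat.sub_sub_self hkn] using hmem' (n - k) (by omega)
    exact hB'.false_of_dictatesOn hrule hsp hC'.dictatesOn hji (hmem l le_rfl)
      (hC'mem l (by omega) (by omega)) (hC'mem (l + 1) (by omega) (by omega)) (hadj l hl)

end DictRegion

end Regions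

/-- Lemma 2: two dictatorial regions connected by a path merge
into a single dictatorial region. -/
theorem stmt14_union (D : Set (Pref A))
    (f : (Fin 2 → Pref A) → A) (hrule : IsRule D f) (hsp : StrategyProof D f)
    (Abar Ahat : Set A) (h1 : 1 < Abar.ncard) (h2 : 1 < Ahat.ncard)
    (hc1 : ((adjGraph D).induce Abar).Connected)
    (hc2 : ((adjGraph D).induce Ahat).Connected)
    (v : ℕ) (hv : 1 ≤ v) (x : Fin v → A) (hpath : IsPathIn (adjGraph D) x)
    (hx0 : x ⟨0, by omega⟩ ∈ Abar) (hxv : x ⟨v - 1, by omega⟩ ∈ Ahat)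
    (hd1 : DictatorOn D f Abar) (hd2 : DictatorOn D f Ahat) :
    DictatorOn D f (Abar ∪ Set.range x ∪ Ahat) := by
  obtain ⟨i, hi⟩ := dictatorOn_iff.1 hd1
  obtain ⟨j, hj⟩ := dictatorOn_iff.1 hd2
  have hB : DictRegion D f i Abar := ⟨hi, hc1, Set.one_lt_ncard_iff_nontrivial.1 h1⟩
  have hC : DictRegion D f j Ahat := ⟨hj, hc2, Set.one_lt_ncard_iff_nontrivial.1 h2⟩
  obtain ⟨n, rfl⟩ : ∃ n, v = n + 1 := ⟨v - 1, by omega⟩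
  have hclamp (k : Fin (n + 1)) : Fin.clamp k n = k := Fin.ext (min_eq_left (by omega))
  have h0 : x (Fin.clamp 0 n) ∈ Abar := by simpa [Fin.clamp] using hx0
  have hn : x (Fin.clamp n n) ∈ Ahat := by simpa [Fin.clamp] using hxv
  rcases eq_or_ne j i with rfl | hji
  · obtain ⟨B', hB', hsub, hmem⟩ := hB.exists_dictatesOn_path hrule hsp hC hpath.adj_clamp
      hpath.clamp_add_two_ne h0 hn
    refine dictatorOn_iff.2 ⟨j, hB'.mono ?_⟩
    rintro z ((hz | ⟨k, rfl⟩) | hz)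
    · exact hsub (Or.inl hz)
    · simpa [hclamp] using hmem k (by omega)
    · exact hsub (Or.inr hz)
  · exact (hB.false_of_path hrule hsp hC hji hpath.adj_clamp hpath.clamp_add_two_ne h0 hn).elim
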